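/- arXiv:1007.0346 — 2 statements merged into one kernel-verified Lean document; each statement's English description precedes it below -/
import Mathlib

section
/- Let (G,τ) be a topological abelian group and φ: (G,τ) → (G,τ) a topological automorphism. Then ent*_τ(φ) = ent*_τ(φ⁻¹). -/
open Filter Topology ENNReal

variable {G : Type*} [AddCommGroup G]

/-- `B_n(φ,N) = N ∩ φ⁻¹(N) ∩ … ∩ φ^{-(n-1)}(N)`. -/
noncomputable def Bsub (φ : AddMonoid.End G) (N : AddSubgroup G) (n : ℕ) : AddSubgroup G :=
  ⨅ i ∈ Finset.range n, N.comap (φ ^ i : AddMonoid.End G)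

/-- `H*(φ,N) = lim_n log|G/B_n(φ,N)|/n`. -/
noncomputable def Hstar (φ : AddMonoid.End G) (N : AddSubgroup G) : ℝ :=
  limUnder atTop fun n : ℕ => Real.log ((Bsub φ N n).index) / n

/-- The topological adjoint entropy: sup of `H*(φ,N)` over `τ`-open finite-index subgroups. -/
noncomputable def entStar (t : TopologicalSpace G) (φ : AddMonoid.End G) : ℝ≥0∞ :=
  ⨆ (N : AddSubgroup G) (_ : @IsOpen G t ↑N ∧ N.FiniteIndex), ENNReal.ofReal (Hstar φ N)

/-! For an automorphism `φ`, `B_{m+1}(φ⁻¹,N) = φ^m (B_{m+1}(φ,N))`: both consist of the `x`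
with `φ^{-j} x ∈ N` for all `j ≤ m`. An automorphism preserves indices, so `B_n(φ⁻¹,N)` and
`B_n(φ,N)` have the same index for every `n`, whence `H*(φ⁻¹,N) = H*(φ,N)` for every `N`. -/

lemma mem_Bsub {φ : AddMonoid.End G} {N : AddSubgroup G} {n : ℕ} {x : G} :
    x ∈ Bsub φ N n ↔ ∀ i < n, φ^[i] x ∈ N := by
  simp only [Bsub, AddSubgroup.mem_iInf, Finset.mem_range, ← AddMonoid.End.coe_pow]
  rfl

lemma Bsub_succ_eq_comap {φ ψ : AddMonoid.End G} (h : Function.RightInverse ψ φ)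
    (N : AddSubgroup G) (m : ℕ) : Bsub ψ N (m + 1) = (Bsub φ N (m + 1)).comap (ψ ^ m) := by
  ext x
  have shift : ∀ i ≤ m, φ^[i] (ψ^[m] x) = ψ^[m - i] x := fun i hi => by
    obtain ⟨k, rfl⟩ := Nat.exists_eq_add_of_le hi
    rw [Function.iterate_add_apply, (h.iterate i) _, Nat.add_sub_cancel_left]
  change x ∈ Bsub ψ N (m + 1) ↔ (ψ ^ m) x ∈ Bsub φ N (m + 1)
  rw [mem_Bsub, mem_Bsub, AddMonoid.End.coe_pow]
  constructor
  · intro hx i hi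
    rw [shift i (by omega)]
    exact hx _ (by omega)
  · intro hx j hj
    have := hx (m - j) (by omega)
    rwa [shift (m - j) (by omega), Nat.sub_sub_self (by omega)] at this

lemma index_Bsub_symm (φ : G ≃+ G) (N : AddSubgroup G) (n : ℕ) :
    (Bsub φ.symm.toAddMonoidHom N n).index = (Bsub φ.toAddMonoidHom N n).index := by
  cases n with
  | zero => simp [Bsub]
  | succ m =>
    rw [Bsub_succ_eq_comap (φ := φ.toAddMonoidHom) (ψ := φ.symm.toAddMonoidHom)
      φ.apply_symm_apply]
    exact AddSubgroup.index_comap_of_surjective _ (φ.symm.surjective.iterate m)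

lemma Hstar_symm (φ : G ≃+ G) (N : AddSubgroup G) :
    Hstar φ.symm.toAddMonoidHom N = Hstar φ.toAddMonoidHom N := by
  simp only [Hstar, index_Bsub_symm]

lemma entStar_symm (t : TopologicalSpace G) (φ : G ≃+ G) :
    entStar t φ.symm.toAddMonoidHom = entStar t φ.toAddMonoidHom := by
  simp only [entStar, Hstar_symm]

theorem stmt5_general [TopologicalSpace G] (φ : G ≃+ G) :
    entStar ‹TopologicalSpace G› φ.toAddMonoidHom
      = entStar ‹TopologicalSpace G› φ.symm.toAddMonoidHom :=
  (entStar_symm _ φ).symm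

theorem stmt5 [TopologicalSpace G] [IsTopologicalAddGroup G]
    (φ : G ≃+ G) (hφ : Continuous φ) (hφ' : Continuous φ.symm) :
    entStar ‹TopologicalSpace G› φ.toAddMonoidHom
      = entStar ‹TopologicalSpace G› φ.symm.toAddMonoidHom :=
  stmt5_general φ
end

section
/- Let p be a prime, K = ℤ/pℤ, G = K^{(ℕ)} the direct sum of countably many copies of K, and β: G → G the restricted right Bernoulli shift given by β(x₀,x₁,x₂,…) = (0,x₀,x₁,…). Then the adjoint algebraic entropy ent*(β) is infinite; in fact for every positive integer m there exists a finite-index subgroup N of G with H*(β,N) ≥ m·log p. -/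
/-!
Write a finite-index subgroup as `N = ker ψ` with `ψ = (f_0, …, f_{m-1}) : G → K^m`. Then
`B_n(β, N)` is the kernel of `x ↦ (f_r (β^i x))_{i<n, r<m}`, so whenever this map is onto,
`|G / B_n(β, N)| = |K|^{nm}` and `H*(β, N) = m log |K|`. It is onto when `f_r` sums the coordinates
at the positions `2^t` with `t ≡ r (mod m)`: for `2^t ≥ 2n`, the gaps between powers of two are
too wide for any `f_{r'} ∘ β^{i'}` other than `f_r ∘ β^i` to see the coordinate `2^t - i`.
-/

open Filter Topology ENNReal

variable {G : Type*} [AddCommGroup G]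

section Trajectory

variable {H : Type*} [AddCommGroup H]

noncomputable def trajectoryMap (φ : AddMonoid.End G) (ψ : G →+ H) (n : ℕ) : G →+ (Fin n → H) :=
  AddMonoidHom.pi fun i => ψ.comp (φ ^ (i : ℕ))

theorem Bsub_ker (φ : AddMonoid.End G) (ψ : G →+ H) (n : ℕ) :
    Bsub φ ψ.ker n = (trajectoryMap φ ψ n).ker := by
  ext x
  simp only [Bsub, trajectoryMap, AddSubgroup.mem_iInf, Finset.mem_range, AddMonoidHom.mem_ker,
    AddMonoidHom.pi_apply, funext_iff, Pi.zero_apply, Fin.forall_iff]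
  rfl

theorem index_Bsub_ker {φ : AddMonoid.End G} {ψ : G →+ H} {n : ℕ}
    (hsurj : Function.Surjective (trajectoryMap φ ψ n)) :
    (Bsub φ ψ.ker n).index = Nat.card H ^ n := by
  rw [Bsub_ker, AddSubgroup.index_ker, AddMonoidHom.range_eq_top.2 hsurj,
    Nat.card_congr AddSubgroup.topEquiv.toEquiv, Nat.card_fun, Nat.card_fin]

theorem Hstar_ker {φ : AddMonoid.End G} {ψ : G →+ H}
    (hsurj : ∀ n, Function.Surjective (trajectoryMap φ ψ n)) :
    Hstar φ ψ.ker = Real.log (Nat.card H) := by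
  refine Tendsto.limUnder_eq (tendsto_const_nhds.congr' ?_)
  filter_upwards [eventually_ne_atTop 0] with n hn
  rw [index_Bsub_ker (hsurj n), Nat.cast_pow, Real.log_pow]
  field_simp

end Trajectory

theorem ofReal_Hstar_le_entStar {t : TopologicalSpace G} (φ : AddMonoid.End G) {N : AddSubgroup G}
    (hopen : IsOpen[t] (N : Set G)) (hN : N.FiniteIndex) :
    ENNReal.ofReal (Hstar φ N) ≤ entStar t φ :=
  le_iSup₂ (f := fun (N : AddSubgroup G) (_ : IsOpen[t] (N : Set G) ∧ N.FiniteIndex) =>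
    ENNReal.ofReal (Hstar φ N)) N ⟨hopen, hN⟩

theorem entStar_eq_top_of_forall_le_Hstar {t : TopologicalSpace G} (φ : AddMonoid.End G)
    (h : ∀ x : ℝ, ∃ N : AddSubgroup G, IsOpen[t] (N : Set G) ∧ N.FiniteIndex ∧ x ≤ Hstar φ N) :
    entStar t φ = ⊤ := by
  refine ENNReal.eq_top_of_forall_nnreal_le fun r => ?_
  obtain ⟨N, hopen, hN, hr⟩ := h r
  calc (r : ℝ≥0∞) = ENNReal.ofReal r := (ofReal_coe_nnreal).symm
    _ ≤ ENNReal.ofReal (Hstar φ N) := ENNReal.ofReal_le_ofReal hr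
    _ ≤ entStar t φ := ofReal_Hstar_le_entStar φ hopen hN

noncomputable def rightShift (M : Type*) [AddCommMonoid M] : AddMonoid.End (ℕ →₀ M) :=
  Finsupp.mapDomain.addMonoidHom (· + 1)

theorem rightShift_pow_single {M : Type*} [AddCommMonoid M] (i j : ℕ) (c : M) :
    (rightShift M ^ i) (Finsupp.single j c) = Finsupp.single (j + i) c := by
  induction i with
  | zero => rfl
  | succ i ih =>
    rw [pow_succ', AddMonoid.End.coe_mul, Function.comp_apply, ih, ← add_assoc]
    exact Finsupp.mapDomain_single

theorem eq_of_two_pow_sub_add_eq_two_pow {n i i' t t' : ℕ} (hi : i < n) (hi' : i' < n)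
    (hn : 2 * n ≤ 2 ^ t) (h : 2 ^ t - i + i' = 2 ^ t') : t' = t ∧ i' = i := by
  have ht : t' = t := by
    refine le_antisymm ?_ ?_
    · by_contra! h'
      have := Nat.pow_le_pow_right two_pos h'
      rw [pow_succ] at this
      omega
    · by_contra! h'
      have := Nat.pow_le_pow_right two_pos h'
      rw [pow_succ] at this
      omega
  subst ht
  omega

section Dyadic

variable (K : Type*) [Ring K] (m : ℕ)

open Classical in
noncomputable def dyadicCoeff (j : ℕ) : Fin m → K :=
  fun r => if ∃ t, j = 2 ^ t ∧ t % m = r then 1 else 0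

noncomputable def dyadicFunctional : (ℕ →₀ K) →ₗ[K] (Fin m → K) :=
  Finsupp.linearCombination K (dyadicCoeff K m)

variable {K m}

theorem exists_dyadicCoeff_add_eq_single {n : ℕ} (i : Fin n) (r : Fin m) :
    ∃ j, (fun i' : Fin n => dyadicCoeff K m (j + i')) = Pi.single i (Pi.single r 1) := by
  obtain ⟨t, htr, hnt⟩ : ∃ t, t % m = r ∧ 2 * n ≤ 2 ^ t :=
    ⟨r + m * (2 * n), by simp [Nat.mod_eq_of_lt r.2],
      (Nat.le_mul_of_pos_left _ r.pos).trans ((Nat.le_add_left _ _).trans Nat.lt_two_pow_self.le)⟩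
  have hdyadic (i' : Fin n) (r' : Fin m) :
      (∃ t', 2 ^ t - (i : ℕ) + i' = 2 ^ t' ∧ t' % m = r') ↔ i' = i ∧ r' = r := by
    constructor
    · rintro ⟨t', ht', hr'⟩
      obtain ⟨rfl, hi⟩ := eq_of_two_pow_sub_add_eq_two_pow i.2 i'.2 hnt ht'
      exact ⟨Fin.ext hi, Fin.ext (hr'.symm.trans htr)⟩
    · rintro ⟨rfl, rfl⟩
      exact ⟨t, Nat.sub_add_cancel (by omega), htr⟩
  refine ⟨2 ^ t - i, funext fun i' => funext fun r' => ?_⟩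
  simp only [dyadicCoeff, hdyadic, Pi.single_apply]
  split_ifs <;> simp_all

theorem trajectoryMap_dyadicFunctional_surjective (n : ℕ) :
    Function.Surjective
      (trajectoryMap (rightShift K) (dyadicFunctional K m).toAddMonoidHom n) := by
  classical
  let L := Finsupp.linearCombination K fun j (i : Fin n) => dyadicCoeff K m (j + i)
  have hL : trajectoryMap (rightShift K) (dyadicFunctional K m).toAddMonoidHom n =
      L.toAddMonoidHom := by
    refine Finsupp.addHom_ext fun j c => funext fun i => ?_
    change dyadicFunctional K m ((rightShift K ^ (i : ℕ)) (Finsupp.single j c)) = _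
    simp [L, dyadicFunctional, rightShift_pow_single]
  rw [hL]
  refine LinearMap.range_eq_top.1 (eq_top_iff.2 ?_)
  rw [Finsupp.range_linearCombination, ← (Pi.basis fun _ : Fin n => Pi.basisFun K (Fin m)).span_eq]
  refine Submodule.span_mono ?_
  rintro _ ⟨⟨i, r⟩, rfl⟩
  simpa using exists_dyadicCoeff_add_eq_single i r

theorem Hstar_ker_dyadicFunctional :
    Hstar (rightShift K) (dyadicFunctional K m).toAddMonoidHom.ker = m * Real.log (Nat.card K) := by
  rw [Hstar_ker trajectoryMap_dyadicFunctional_surjective, Nat.card_fun, Nat.card_fin,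
    Nat.cast_pow, Real.log_pow]

end Dyadic

theorem stmt19 (p : ℕ) (hp : p.Prime) :
    entStar (⊥ : TopologicalSpace (ℕ →₀ ZMod p))
        (Finsupp.mapDomain.addMonoidHom (· + 1) : (ℕ →₀ ZMod p) →+ (ℕ →₀ ZMod p)) = ⊤ ∧
    ∀ m : ℕ, 0 < m → ∃ N : AddSubgroup (ℕ →₀ ZMod p), N.FiniteIndex ∧
      (m : ℝ) * Real.log p ≤
        Hstar (Finsupp.mapDomain.addMonoidHom (· + 1) : (ℕ →₀ ZMod p) →+ (ℕ →₀ ZMod p)) N := by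
  have : Fact p.Prime := ⟨hp⟩
  have hHstar (m : ℕ) :
      Hstar (rightShift (ZMod p)) (dyadicFunctional (ZMod p) m).toAddMonoidHom.ker =
        m * Real.log p := by
    rw [Hstar_ker_dyadicFunctional, Nat.card_zmod]
  refine ⟨entStar_eq_top_of_forall_le_Hstar _ fun x => ?_, fun m _ => ⟨_, inferInstance, (hHstar m).ge⟩⟩
  have hlog : 0 < Real.log p := Real.log_pos (mod_cast hp.one_lt)
  obtain ⟨m, hm⟩ := exists_nat_ge (x / Real.log p)
  exact ⟨_, trivial, inferInstance, ((div_le_iff₀ hlog).1 hm).trans (hHstar m).ge⟩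
end
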